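/- (Variance of CIPS.) Define the single-sample CIPS value f_CIPS(x,A,ω) := ∑_{a∈𝒜} w(x,a)·C(ω,a)·R(ω,a), where w(x,a) := p_c(x,a,π)/p_c(x,a,π₀) with the convention t/0 := 0. Under the independence of potential rewards condition, the click–reward factorization condition, the click-wise common support condition, and conditional uncorrelatedness across actions, the variance of f_CIPS over one logged sample decomposes as Var_{x∼p, A∼π₀(x), ω∼κ(x,A)}[f_CIPS] = E_{x∼p, A∼π₀(x)}[ ∑_{a∈𝒜} w(x,a)²·σ²(x,a,A) ] + E_{x∼p}[ Var_{A∼π₀(x)}[ ∑_{a∈𝒜} w(x,a)·q_r(x,a)·p_c(x,a,A) ] ] + Var_{x∼p}[ ∑_{a∈𝒜} p_c(x,a,π)·q_r(x,a) ]. -/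

import Mathlib

open scoped BigOperators Classical



/-- Expectation of a real-valued function under a PMF on a finite type. -/
noncomputable def pexp {X : Type*} [Fintype X] (p : PMF X) (f : X → ℝ) : ℝ :=
  ∑ x, (p x).toReal * f x

/-- Variance of a real-valued function under a PMF on a finite type. -/
noncomputable def pvar {X : Type*} [Fintype X] (p : PMF X) (f : X → ℝ) : ℝ :=
  pexp p (fun x => (f x - pexp p f) ^ 2)

section aux
variable {X Y : Type*} [Fintype X] [Fintype Y]

lemma pexp_add (p : PMF X) (f g : X → ℝ) :
    pexp p (fun x => f x + g x) = pexp p f + pexp p g := by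
  simp [pexp, mul_add, Finset.sum_add_distrib]

lemma pexp_sub (p : PMF X) (f g : X → ℝ) :
    pexp p (fun x => f x - g x) = pexp p f - pexp p g := by
  simp [pexp, mul_sub, Finset.sum_sub_distrib]

lemma pexp_const_mul (p : PMF X) (c : ℝ) (f : X → ℝ) :
    pexp p (fun x => c * f x) = c * pexp p f := by
  simp [pexp, Finset.mul_sum]; exact Finset.sum_congr rfl fun x _ => by ring

lemma pexp_one (p : PMF X) : pexp p (fun _ => 1) = 1 := by
  have h := p.tsum_coe
  rw [tsum_fintype] at h
  have : (∑ x, p x).toReal = 1 := by rw [h]; simp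
  rw [ENNReal.toReal_sum (fun x _ => PMF.apply_ne_top p x)] at this
  simpa [pexp] using this

lemma pexp_sum {A : Type*} (s : Finset A) (p : PMF X) (f : A → X → ℝ) :
    pexp p (fun x => ∑ a ∈ s, f a x) = ∑ a ∈ s, pexp p (f a) := by
  simp [pexp, Finset.mul_sum]
  exact Finset.sum_comm

lemma pexp_nonneg (p : PMF X) (f : X → ℝ) (hf : ∀ x, 0 ≤ f x) : 0 ≤ pexp p f :=
  Finset.sum_nonneg fun x _ => mul_nonneg ENNReal.toReal_nonneg (hf x)

lemma pexp_bind (p : PMF X) (q : X → PMF Y) (f : Y → ℝ) :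
    pexp (p.bind q) f = pexp p (fun x => pexp (q x) f) := by
  unfold pexp
  have h : ∀ y, ((p.bind q) y).toReal = ∑ x, (p x).toReal * (q x y).toReal := by
    intro y
    rw [PMF.bind_apply, tsum_fintype,
      ENNReal.toReal_sum (fun x _ => ENNReal.mul_ne_top (PMF.apply_ne_top p x) (PMF.apply_ne_top (q x) y))]
    exact Finset.sum_congr rfl fun x _ => ENNReal.toReal_mul
  simp_rw [h, Finset.sum_mul]
  rw [Finset.sum_comm]
  simp_rw [mul_assoc, ← Finset.mul_sum]

lemma pexp_pure (x : X) (f : X → ℝ) : pexp (PMF.pure x) f = f x := by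
  simp [pexp, PMF.pure_apply]
  rw [Finset.sum_eq_single x] <;> simp +contextual [eq_comm]

lemma pexp_map (p : PMF X) (g : X → Y) (f : Y → ℝ) :
    pexp (p.map g) f = pexp p (fun x => f (g x)) := by
  rw [PMF.map, pexp_bind]
  simp [pexp_pure, Function.comp]

lemma pvar_eq (p : PMF X) (f : X → ℝ) :
    pvar p f = pexp p (fun x => f x ^ 2) - (pexp p f) ^ 2 := by
  have h : (fun x => (f x - pexp p f) ^ 2)
      = fun x => f x ^ 2 + ((-2 * pexp p f) * f x + (pexp p f ^ 2) * 1) := by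
    funext x; ring
  rw [pvar, h, pexp_add, pexp_add, pexp_const_mul, pexp_const_mul, pexp_one]
  ring

lemma pvar_map (p : PMF X) (g : X → Y) (f : Y → ℝ) :
    pvar (p.map g) f = pvar p (fun x => f (g x)) := by
  rw [pvar_eq, pvar_eq, pexp_map, pexp_map]

lemma pvar_bind (p : PMF X) (q : X → PMF Y) (f : Y → ℝ) :
    pvar (p.bind q) f = pexp p (fun x => pvar (q x) f) + pvar p (fun x => pexp (q x) f) := by
  rw [pvar_eq, pexp_bind, pexp_bind, pvar_eq]
  have h1 : pexp p (fun x => pvar (q x) f)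
      = pexp p (fun x => pexp (q x) (fun y => f y ^ 2) - (pexp (q x) f) ^ 2) := by
    simp_rw [pvar_eq]
  rw [h1, pexp_sub]
  have h2 : pexp p (fun x => (pexp (q x) f) ^ 2)
      = pexp p (fun x => pexp (q x) f ^ 2) := rfl
  ring_nf

lemma pvar_sum_uncorr {A : Type*} [Fintype A] (p : PMF X) (c : A → ℝ) (g : A → X → ℝ)
    (h : ∀ a a', a ≠ a' → pexp p (fun x => g a x * g a' x) = pexp p (g a) * pexp p (g a')) :
    pvar p (fun x => ∑ a, c a * g a x) = ∑ a, (c a) ^ 2 * pvar p (g a) := by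
  rw [pvar_eq]
  have hsq : (fun x => (∑ a, c a * g a x) ^ 2)
      = fun x => ∑ a, ∑ a', (c a * c a') * (g a x * g a' x) := by
    funext x
    rw [sq, Finset.sum_mul_sum]
    exact Finset.sum_congr rfl fun a _ => Finset.sum_congr rfl fun a' _ => by ring
  rw [hsq, pexp_sum]
  have h2 : ∀ a : A, pexp p (fun x => ∑ a', (c a * c a') * (g a x * g a' x))
      = ∑ a', (c a * c a') * pexp p (fun x => g a x * g a' x) := by
    intro a
    rw [pexp_sum]
    exact Finset.sum_congr rfl fun a' _ => pexp_const_mul p _ _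
  simp_rw [h2]
  have h3 : pexp p (fun x => ∑ a, c a * g a x) = ∑ a, c a * pexp p (g a) := by
    rw [pexp_sum]; exact Finset.sum_congr rfl fun a _ => pexp_const_mul p _ _
  rw [h3, sq, Finset.sum_mul_sum, ← Finset.sum_sub_distrib]
  refine Finset.sum_congr rfl fun a _ => ?_
  rw [← Finset.sum_sub_distrib]
  rw [Finset.sum_eq_single a]
  · rw [pvar_eq]; ring
  · intro b _ hb
    rw [h a b (Ne.symm hb)]; ring
  · intro ha; exact absurd (Finset.mem_univ a) ha
end aux

/-- Joint distribution of one logged sample (x, A, ω) with x ∼ p, A ∼ π₀(x), ω ∼ κ(x,A). -/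
noncomputable def logged {𝒳 ℛ Ω : Type*} (p : PMF 𝒳) (π₀ : 𝒳 → PMF ℛ)
    (κ : 𝒳 → ℛ → PMF Ω) : PMF (𝒳 × ℛ × Ω) :=
  p.bind fun x => (π₀ x).bind fun A => (κ x A).map fun ω => (x, A, ω)

/-- Click probability of action a at context x given ranking A: p_c(x,a,A). -/
noncomputable def pcA {𝒳 ℛ Ω 𝒜 : Type*} [Fintype Ω]
    (κ : 𝒳 → ℛ → PMF Ω) (C : Ω → 𝒜 → ℝ) (x : 𝒳) (a : 𝒜) (A : ℛ) : ℝ :=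
  pexp (κ x A) fun ω => C ω a

/-- Marginalized click probability of action a at context x under policy μ: p_c(x,a,μ). -/
noncomputable def pcPol {𝒳 ℛ Ω 𝒜 : Type*} [Fintype Ω] [Fintype ℛ]
    (κ : 𝒳 → ℛ → PMF Ω) (C : Ω → 𝒜 → ℝ) (μ : 𝒳 → PMF ℛ) (x : 𝒳) (a : 𝒜) : ℝ :=
  pexp (μ x) fun A => pcA κ C x a A

/-- Policy value V(π). -/
noncomputable def polValue {𝒳 ℛ Ω 𝒜 : Type*} [Fintype 𝒳] [Fintype ℛ] [Fintype Ω] [Fintype 𝒜]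
    (p : PMF 𝒳) (π : 𝒳 → PMF ℛ) (κ : 𝒳 → ℛ → PMF Ω) (C R : Ω → 𝒜 → ℝ) : ℝ :=
  pexp p fun x => pexp (π x) fun A => pexp (κ x A) fun ω => ∑ a, C ω a * R ω a

/-- Variance decomposition of CIPS. -/
theorem CIPS_variance {𝒳 ℛ Ω 𝒜 : Type*}
    [Fintype 𝒳] [Nonempty 𝒳] [Fintype ℛ] [Nonempty ℛ] [Fintype Ω] [Nonempty Ω] [Fintype 𝒜]
    (p : PMF 𝒳) (π π₀ : 𝒳 → PMF ℛ) (κ : 𝒳 → ℛ → PMF Ω)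
    (C R : Ω → 𝒜 → ℝ) (hC : ∀ ω a, C ω a = 0 ∨ C ω a = 1)
    (q_r : 𝒳 → 𝒜 → ℝ)
    (hind : ∀ x a A, pexp (κ x A) (fun ω => R ω a) = q_r x a)
    (hfact : ∀ x a A,
      pexp (κ x A) (fun ω => C ω a * R ω a) = pcA κ C x a A * q_r x a)
    (hsupp : ∀ x a, 0 < pcPol κ C π x a → 0 < pcPol κ C π₀ x a)
    (huncorr : ∀ x A a a', a ≠ a' →
      pexp (κ x A) (fun ω => (C ω a * R ω a) * (C ω a' * R ω a'))
        = pexp (κ x A) (fun ω => C ω a * R ω a) *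
          pexp (κ x A) (fun ω => C ω a' * R ω a')) :
    pvar (logged p π₀ κ)
        (fun s => ∑ a, (pcPol κ C π s.1 a / pcPol κ C π₀ s.1 a) *
          C s.2.2 a * R s.2.2 a)
    = pexp p (fun x => pexp (π₀ x) (fun A => ∑ a,
          (pcPol κ C π x a / pcPol κ C π₀ x a) ^ 2 *
            pvar (κ x A) (fun ω => C ω a * R ω a)))
      + pexp p (fun x => pvar (π₀ x) (fun A => ∑ a,
          (pcPol κ C π x a / pcPol κ C π₀ x a) * q_r x a * pcA κ C x a A))
      + pvar p (fun x => ∑ a, pcPol κ C π x a * q_r x a) := by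
  classical
  set w : 𝒳 → 𝒜 → ℝ := fun x a => pcPol κ C π x a / pcPol κ C π₀ x a with hwdef
  have hCnn : ∀ ω a, 0 ≤ C ω a := fun ω a => by rcases hC ω a with h | h <;> simp [h]
  have hpcA : ∀ x a A, 0 ≤ pcA κ C x a A := fun x a A => pexp_nonneg _ _ (fun ω => hCnn ω a)
  have hpcPol : ∀ (μ : 𝒳 → PMF ℛ) x a, 0 ≤ pcPol κ C μ x a :=
    fun μ x a => pexp_nonneg _ _ (fun A => hpcA x a A)
  have hw : ∀ x a, w x a * pcPol κ C π₀ x a = pcPol κ C π x a := by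
    intro x a
    by_cases h0 : pcPol κ C π₀ x a = 0
    · have hπ : pcPol κ C π x a = 0 := by
        by_contra hne
        have hlt := hsupp x a (lt_of_le_of_ne (hpcPol π x a) (Ne.symm hne))
        rw [h0] at hlt; exact lt_irrefl 0 hlt
      simp [hwdef, h0, hπ]
    · simp only [hwdef]; field_simp
  have hEmap : ∀ x A, pexp (κ x A) (fun ω => ∑ a, w x a * C ω a * R ω a)
      = ∑ a, w x a * q_r x a * pcA κ C x a A := by
    intro x A
    rw [pexp_sum]
    refine Finset.sum_congr rfl fun a _ => ?_
    have h1 : (fun ω => w x a * C ω a * R ω a) = fun ω => w x a * (C ω a * R ω a) := by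
      funext ω; ring
    rw [h1, pexp_const_mul, hfact]; ring
  have hVmap : ∀ x A, pvar (κ x A) (fun ω => ∑ a, w x a * C ω a * R ω a)
      = ∑ a, (w x a) ^ 2 * pvar (κ x A) (fun ω => C ω a * R ω a) := by
    intro x A
    have h1 : (fun ω => ∑ a, w x a * C ω a * R ω a)
        = fun ω => ∑ a, w x a * (C ω a * R ω a) := by
      funext ω; exact Finset.sum_congr rfl fun a _ => by ring
    rw [h1]
    exact pvar_sum_uncorr (κ x A) (w x) (fun a ω => C ω a * R ω a)
      (fun a a' h => huncorr x A a a' h)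
  have hEA : ∀ x, pexp (π₀ x) (fun A => ∑ a, w x a * q_r x a * pcA κ C x a A)
      = ∑ a, pcPol κ C π x a * q_r x a := by
    intro x
    rw [pexp_sum]
    refine Finset.sum_congr rfl fun a _ => ?_
    have h1 : (fun A => w x a * q_r x a * pcA κ C x a A)
        = fun A => (w x a * q_r x a) * pcA κ C x a A := rfl
    rw [h1, pexp_const_mul]
    show w x a * q_r x a * pcPol κ C π₀ x a = _
    rw [mul_right_comm, hw x a]
  have key : ∀ x, pvar ((π₀ x).bind fun A => (κ x A).map fun ω => (x, A, ω))
      (fun s : 𝒳 × ℛ × Ω => ∑ a, w s.1 a * C s.2.2 a * R s.2.2 a)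
      = pexp (π₀ x) (fun A => ∑ a, (w x a) ^ 2 * pvar (κ x A) (fun ω => C ω a * R ω a))
        + pvar (π₀ x) (fun A => ∑ a, w x a * q_r x a * pcA κ C x a A) := by
    intro x
    rw [pvar_bind]
    congr 1
    · refine congrArg (pexp (π₀ x)) (funext fun A => ?_)
      rw [pvar_map]
      exact hVmap x A
    · refine congrArg (pvar (π₀ x)) (funext fun A => ?_)
      rw [pexp_map]
      exact hEmap x A
  have key2 : ∀ x, pexp ((π₀ x).bind fun A => (κ x A).map fun ω => (x, A, ω))
      (fun s : 𝒳 × ℛ × Ω => ∑ a, w s.1 a * C s.2.2 a * R s.2.2 a)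
      = ∑ a, pcPol κ C π x a * q_r x a := by
    intro x
    rw [pexp_bind]
    have h1 : (fun A => pexp ((κ x A).map fun ω => (x, A, ω))
        (fun s : 𝒳 × ℛ × Ω => ∑ a, w s.1 a * C s.2.2 a * R s.2.2 a))
        = fun A => ∑ a, w x a * q_r x a * pcA κ C x a A := by
      funext A; rw [pexp_map]; exact hEmap x A
    rw [h1, hEA]
  rw [logged, pvar_bind]
  simp only [hwdef] at key key2
  simp only [key, key2, pexp_add]
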